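/- Let E be a finite strongly connected directed graph with at least one edge, let v ∈ E⁰, and let d ≥ 1 be the period of v. Then T_E = [v] ⊕ ¹[v] ⊕ ⋯ ⊕ ^{d-1}[v], i.e., every element of T_E can be written uniquely as x₀ + x₁ + ⋯ + x_{d-1} with xᵢ ∈ ⁱ[v] = [v(i)]; equivalently, the addition map [v] × ¹[v] × ⋯ × ^{d-1}[v] → T_E is a bijection. -/

import Mathlib

/-- A directed graph: a set of vertices `V`, a set of edges `Ed`,
and source and range maps. -/
structure DGraph (V : Type) (Ed : Type) where
  s : Ed → V
  r : Ed → V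

namespace DGraph

variable {V Ed : Type} (G : DGraph V Ed)

/-- A sink is a vertex emitting no edges. -/
def IsSink (v : V) : Prop := ∀ e : Ed, G.s e ≠ v

/-- A source is a vertex receiving no edges. -/
def IsSource (v : V) : Prop := ∀ e : Ed, G.r e ≠ v

/-- A graph is row-finite if every vertex emits finitely many edges. -/
def RowFinite : Prop := ∀ v : V, {e : Ed | G.s e = v}.Finite

theorem rowFinite_of_finite [Finite Ed] : G.RowFinite := fun _ => Set.toFinite _

/-- There is an edge from `u` to `w`. -/
def Step (u w : V) : Prop := ∃ e : Ed, G.s e = u ∧ G.r e = w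

/-- `u` flows to `w`: `u = w` or there is a path from `u` to `w`. -/
def FlowsTo (u w : V) : Prop := Relation.ReflTransGen G.Step u w

/-- Strongly connected graph. -/
def StronglyConnected : Prop := ∀ u w : V, G.FlowsTo u w

/-- A (finite) path of length `≥ 1`: a nonempty list of consecutive edges. -/
structure GPath (G : DGraph V Ed) where
  edges : List Ed
  ne : edges ≠ []
  chain : edges.Chain' (fun e f => G.r e = G.s f)

namespace GPath

variable {G}

/-- The source of a path. -/
def src (p : G.GPath) : V := G.s (p.edges.head p.ne)

/-- The range of a path. -/
def tgt (p : G.GPath) : V := G.r (p.edges.getLast p.ne)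

/-- The length of a path. -/
def length (p : G.GPath) : ℕ := p.edges.length

/-- The set of vertices of a path (the sources of its edges). -/
def vset (p : G.GPath) : Set V := {v | ∃ e ∈ p.edges, G.s e = v}

/-- A cycle: a closed path with pairwise distinct edges. -/
def IsCycle (p : G.GPath) : Prop := p.src = p.tgt ∧ p.edges.Nodup

/-- The path (cycle) has an exit: an edge `f` with `s f = s eᵢ` but `f ≠ eᵢ`. -/
def HasExit (p : G.GPath) : Prop := ∃ (f e : Ed), e ∈ p.edges ∧ G.s f = G.s e ∧ f ≠ e

/-- An extreme cycle: a cycle with an exit such that every path leaving it returns to it. -/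
def IsExtremeCycle (p : G.GPath) : Prop :=
  p.IsCycle ∧ p.HasExit ∧
    ∀ lam : G.GPath, lam.src ∈ p.vset → ∃ w ∈ p.vset, G.FlowsTo lam.tgt w

end GPath

/-- Lengths of closed paths based at `v`. -/
def closedLens (v : V) : Set ℕ :=
  {n | ∃ p : G.GPath, p.src = v ∧ p.tgt = v ∧ p.length = n}

/-- `d` is the period of `v`: the greatest common divisor of the lengths of closed
paths based at `v`. -/
def IsPeriodOf (d : ℕ) (v : V) : Prop :=
  (∀ n ∈ G.closedLens v, d ∣ n) ∧ ∀ k : ℕ, (∀ n ∈ G.closedLens v, k ∣ n) → k ∣ d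

/-- A line point: no vertex that `v` flows to has a bifurcation or lies on a closed path. -/
def LinePoint (v : V) : Prop :=
  ∀ w : V, G.FlowsTo v w →
    (∀ e f : Ed, G.s e = w → G.s f = w → e = f) ∧
      ¬ ∃ p : G.GPath, p.src = w ∧ p.tgt = w

end DGraph

section MonoidOrder

variable {M : Type} [AddCommMonoid M]

/-- The algebraic preorder on a commutative monoid: `a ≤ b` iff `a + c = b` for some `c`. -/
def MLe (a b : M) : Prop := ∃ c : M, a + c = b

/-- An order ideal of a commutative monoid. -/
structure IsOrderIdeal (I : Set M) : Prop where
  zero_mem : (0 : M) ∈ I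
  add_mem : ∀ {a b : M}, a ∈ I → b ∈ I → a + b ∈ I
  mem_of_le : ∀ {a b : M}, b ∈ I → MLe a b → a ∈ I

/-- The order ideal generated by an element `x`: all `y` with `y ≤ n • x` for some `n`. -/
def orderIdealGen (x : M) : Set M := {y | ∃ n : ℕ, MLe y (n • x)}

/-- A simple order ideal: a nonzero order ideal whose only order sub-ideals are `0` and itself. -/
def IsSimpleOrderIdeal (I : Set M) : Prop :=
  IsOrderIdeal I ∧ I ≠ {0} ∧ ∀ J : Set M, IsOrderIdeal J → J ⊆ I → J = {0} ∨ J = I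

/-- The nonzero elements of `I` form a group under addition. -/
def NonzeroGroup (I : Set M) : Prop :=
  (∀ x ∈ I, ∀ y ∈ I, x ≠ 0 → y ≠ 0 → x + y ≠ 0) ∧
    ∃ e ∈ I, e ≠ (0 : M) ∧ (∀ x ∈ I, x ≠ 0 → e + x = x) ∧
      ∀ x ∈ I, x ≠ 0 → ∃ y ∈ I, y ≠ 0 ∧ x + y = e

/-- The congruence on a commutative monoid associated to an ideal `I`:
`a ≈ b` iff `a + c = b + d` for some `c, d ∈ I`. -/
def idealCon (I : Set M) (h0 : (0 : M) ∈ I)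
    (hadd : ∀ {a b : M}, a ∈ I → b ∈ I → a + b ∈ I) : AddCon M where
  r a b := ∃ c ∈ I, ∃ d ∈ I, a + c = b + d
  iseqv := by
    refine ⟨fun a => ⟨0, h0, 0, h0, rfl⟩, ?_, ?_⟩
    · rintro a b ⟨c, hc, d, hd, h⟩
      exact ⟨d, hd, c, hc, h.symm⟩
    · rintro a b c ⟨x, hx, y, hy, h1⟩ ⟨x', hx', y', hy', h2⟩
      refine ⟨x + x', hadd hx hx', y' + y, hadd hy' hy, ?_⟩
      calc a + (x + x') = (a + x) + x' := (add_assoc _ _ _).symm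
        _ = (b + y) + x' := by rw [h1]
        _ = (b + x') + y := by rw [add_right_comm]
        _ = (c + y') + y := by rw [h2]
        _ = c + (y' + y) := add_assoc _ _ _
  add' := by
    rintro a b a' b' ⟨c, hc, d, hd, h1⟩ ⟨c', hc', d', hd', h2⟩
    refine ⟨c + c', hadd hc hc', d + d', hadd hd hd', ?_⟩
    rw [add_add_add_comm, h1, h2, add_add_add_comm]

end MonoidOrder

namespace DGraph

variable {V Ed : Type} (G : DGraph V Ed)

/-- The defining relations of the talented monoid, as a relation on the free
commutative monoid on `E⁰ × ℤ`. -/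
def talRel (hrf : G.RowFinite) (a b : (V × ℤ) →₀ ℕ) : Prop :=
  ∃ (v : V) (i : ℤ), ¬ G.IsSink v ∧ a = Finsupp.single (v, i) 1 ∧
    b = ∑ e ∈ (hrf v).toFinset, Finsupp.single (G.r e, i + 1) 1

/-- The congruence generated by the defining relations of the talented monoid. -/
noncomputable def talCon (hrf : G.RowFinite) : AddCon ((V × ℤ) →₀ ℕ) := addConGen (G.talRel hrf)

/-- The talented monoid `T_E` of a row-finite graph. -/
noncomputable def Tal (hrf : G.RowFinite) : Type := (G.talCon hrf).Quotient

noncomputable instance (hrf : G.RowFinite) : AddCommMonoid (G.Tal hrf) :=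
  inferInstanceAs (AddCommMonoid (G.talCon hrf).Quotient)

/-- The generator `v(i)` of the talented monoid. -/
noncomputable def gen (hrf : G.RowFinite) (v : V) (i : ℤ) : G.Tal hrf :=
  (G.talCon hrf).mk' (Finsupp.single (v, i) 1)

/-- The action of `n : ℤ` on the talented monoid, determined by `ⁿv(i) = v(i+n)`. -/
noncomputable def shift (hrf : G.RowFinite) (n : ℤ) : G.Tal hrf →+ G.Tal hrf :=
  AddCon.lift _
    ((AddCon.mk' _).comp
      (Finsupp.mapDomain.addMonoidHom (fun p : V × ℤ => (p.1, p.2 + n))))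
    (by
      refine AddCon.addConGen_le.mpr fun a b hab => ?_
      obtain ⟨v, i, hv, rfl, rfl⟩ := hab
      refine (AddCon.ker_rel _).mpr ?_
      show (G.talCon hrf).mk'
            (Finsupp.mapDomain (fun p : V × ℤ => (p.1, p.2 + n)) (Finsupp.single (v, i) 1)) =
          (G.talCon hrf).mk'
            (Finsupp.mapDomain (fun p : V × ℤ => (p.1, p.2 + n))
              (∑ e ∈ (hrf v).toFinset, Finsupp.single (G.r e, i + 1) 1))
      rw [Finsupp.mapDomain_single, Finsupp.mapDomain_finset_sum]
      simp only [Finsupp.mapDomain_single]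
      refine (AddCon.eq (G.talCon hrf)).mpr ?_
      refine AddConGen.Rel.of _ _ ⟨v, i + n, hv, rfl, ?_⟩
      exact Finset.sum_congr rfl fun e _ => by rw [add_right_comm])

end DGraph


namespace DGraph

variable {V Ed : Type} (G : DGraph V Ed)

/-- A ℤ-order ideal of the talented monoid: an order ideal closed under the ℤ-action. -/
def IsZOrderIdeal (hrf : G.RowFinite) (I : Set (G.Tal hrf)) : Prop :=
  IsOrderIdeal I ∧ ∀ (n : ℤ) (x : G.Tal hrf), x ∈ I → G.shift hrf n x ∈ I

/-- The ℤ-order ideal generated by a set `S`. -/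
def zIdealGen (hrf : G.RowFinite) (S : Set (G.Tal hrf)) : Set (G.Tal hrf) :=
  ⋂₀ {I : Set (G.Tal hrf) | G.IsZOrderIdeal hrf I ∧ S ⊆ I}

/-- A simple ℤ-order ideal: a nonzero ℤ-order ideal whose only ℤ-order sub-ideals
are `0` and itself. -/
def IsSimpleZIdeal (hrf : G.RowFinite) (I : Set (G.Tal hrf)) : Prop :=
  G.IsZOrderIdeal hrf I ∧ I ≠ {0} ∧
    ∀ J : Set (G.Tal hrf), G.IsZOrderIdeal hrf J → J ⊆ I → J = {0} ∨ J = I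

/-- The adjacency matrix of a graph: the `(u, w)` entry is the number of edges
from `u` to `w`. -/
noncomputable def adj : Matrix V V ℕ := Matrix.of fun u w => Nat.card {e : Ed // G.s e = u ∧ G.r e = w}

/-- The defining relations of the graph monoid `M_E`, as a relation on the free
commutative monoid on `E⁰`. -/
def gmRel (hrf : G.RowFinite) (a b : V →₀ ℕ) : Prop :=
  ∃ v : V, ¬ G.IsSink v ∧ a = Finsupp.single v 1 ∧
    b = ∑ e ∈ (hrf v).toFinset, Finsupp.single (G.r e) 1

/-- The graph monoid `M_E` of a row-finite graph. -/
noncomputable def GM (hrf : G.RowFinite) : Type := (addConGen (G.gmRel hrf)).Quotient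

noncomputable instance (hrf : G.RowFinite) : AddCommMonoid (G.GM hrf) :=
  inferInstanceAs (AddCommMonoid (addConGen (G.gmRel hrf)).Quotient)

/-- The smallest reflexive, transitive and additive relation on the free commutative
monoid on `E⁰` containing the defining relations of the graph monoid. -/
inductive FlowRel (hrf : G.RowFinite) : (V →₀ ℕ) → (V →₀ ℕ) → Prop
  | of {a b : V →₀ ℕ} : G.gmRel hrf a b → FlowRel hrf a b
  | refl (a : V →₀ ℕ) : FlowRel hrf a a
  | trans {a b c : V →₀ ℕ} : FlowRel hrf a b → FlowRel hrf b c → FlowRel hrf a c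
  | add_right {a b : V →₀ ℕ} (c : V →₀ ℕ) : FlowRel hrf a b → FlowRel hrf (a + c) (b + c)

/-- The quotient of the talented monoid by a ℤ-order ideal. -/
noncomputable def TalQuot (hrf : G.RowFinite) (I : Set (G.Tal hrf))
    (hI : G.IsZOrderIdeal hrf I) : Type :=
  (idealCon I hI.1.zero_mem (fun ha hb => hI.1.add_mem ha hb)).Quotient

noncomputable instance (hrf : G.RowFinite) (I : Set (G.Tal hrf))
    (hI : G.IsZOrderIdeal hrf I) : AddCommMonoid (G.TalQuot hrf I hI) :=
  inferInstanceAs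
    (AddCommMonoid (idealCon I hI.1.zero_mem (fun ha hb => hI.1.add_mem ha hb)).Quotient)

/-- The ℤ-action descends to the quotient of the talented monoid by a ℤ-order ideal. -/
noncomputable def qshift (hrf : G.RowFinite) (I : Set (G.Tal hrf))
    (hI : G.IsZOrderIdeal hrf I) (n : ℤ) : G.TalQuot hrf I hI →+ G.TalQuot hrf I hI :=
  AddCon.lift _
    ((AddCon.mk' (idealCon I hI.1.zero_mem (fun ha hb => hI.1.add_mem ha hb))).comp
      (G.shift hrf n))
    (by
      rintro a b ⟨c, hc, d, hd, h⟩
      show AddCon.ker _ _ _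
      refine (AddCon.ker_rel _).mpr ?_
      show (AddCon.mk' _) (G.shift hrf n a) = (AddCon.mk' _) (G.shift hrf n b)
      refine (AddCon.eq _).mpr ?_
      exact ⟨G.shift hrf n c, hI.2 n c hc, G.shift hrf n d, hI.2 n d hd, by
        rw [← map_add, ← map_add, h]⟩)

end DGraph

section Statement10Aux

set_option autoImplicit false
set_option linter.unusedSectionVars false

open DGraph Finsupp

variable {V Ed : Type} [Fintype V] [Fintype Ed]

/-- `reach G n u w` : there is a path of length `n` from `u` to `w` (length `0` means `u = w`). -/
def reach (G : DGraph V Ed) : ℕ → V → V → Prop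
  | 0, u, w => u = w
  | (n+1), u, w => ∃ e : Ed, G.s e = u ∧ reach G n (G.r e) w

variable {G : DGraph V Ed}

lemma reach_zero (u : V) : reach G 0 u u := rfl

lemma reach_trans : ∀ {m : ℕ} {u : V} {n : ℕ} {w x : V},
    reach G m u w → reach G n w x → reach G (m + n) u x := by
  intro m
  induction m with
  | zero =>
    intro u n w x h1 h2
    rw [Nat.zero_add]
    exact (h1 : u = w) ▸ h2
  | succ m ih =>
    intro u n w x h1 h2
    obtain ⟨e, he, hr⟩ := h1
    rw [Nat.succ_add]
    exact ⟨e, he, ih hr h2⟩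

lemma chain_reach : ∀ (l : List Ed) (hl : l ≠ []) (_ : l.Chain' (fun e f => G.r e = G.s f)),
    reach G l.length (G.s (l.head hl)) (G.r (l.getLast hl)) := by
  intro l
  induction l with
  | nil => intro hl _; exact absurd rfl hl
  | cons e t ih =>
    intro hl hc
    cases t with
    | nil => exact ⟨e, rfl, rfl⟩
    | cons f t' =>
      obtain ⟨hef, hc'⟩ := List.isChain_cons_cons.mp hc
      have h2 := ih (List.cons_ne_nil f t') hc'
      refine ⟨e, rfl, ?_⟩
      rw [List.getLast_cons (List.cons_ne_nil f t')]
      rw [hef]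
      exact h2

lemma reach_gpath : ∀ (n : ℕ) {u w : V}, reach G (n+1) u w →
    ∃ p : G.GPath, p.src = u ∧ p.tgt = w ∧ p.length = n + 1 := by
  intro n
  induction n with
  | zero =>
    rintro u w ⟨e, he, hr⟩
    exact ⟨⟨[e], by simp, List.isChain_singleton e⟩, he, (hr : G.r e = w), rfl⟩
  | succ n ih =>
    rintro u w ⟨e, he, hr⟩
    obtain ⟨p, hsrc, htgt, hlen⟩ := ih hr
    refine ⟨⟨e :: p.edges, List.cons_ne_nil _ _, ?_⟩, he, ?_, ?_⟩
    · show List.IsChain _ _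
      rw [List.isChain_cons]
      refine ⟨fun y hy => ?_, p.chain⟩
      rw [List.head?_eq_head p.ne] at hy
      rw [← Option.mem_some_iff.mp hy]
      exact hsrc.symm
    · show G.r ((e :: p.edges).getLast _) = w
      rw [List.getLast_cons p.ne]
      exact htgt
    · show (e :: p.edges).length = n + 1 + 1
      rw [List.length_cons]
      rw [show p.edges.length = n + 1 from hlen]

lemma mem_closedLens {v : V} {n : ℕ} : n ∈ G.closedLens v ↔ (reach G n v v ∧ 1 ≤ n) := by
  constructor
  · rintro ⟨p, h1, h2, h3⟩
    have hb : reach G p.length p.src p.tgt := chain_reach p.edges p.ne p.chain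
    rw [h1, h2, h3] at hb
    refine ⟨hb, ?_⟩
    rw [← h3]
    exact List.length_pos_iff.mpr p.ne
  · rintro ⟨h, h1⟩
    obtain ⟨m, rfl⟩ : ∃ m, n = m + 1 := ⟨n - 1, by omega⟩
    obtain ⟨p, hp1, hp2, hp3⟩ := reach_gpath m h
    exact ⟨p, hp1, hp2, hp3⟩

lemma flowsTo_reach {u w : V} (h : G.FlowsTo u w) : ∃ n, reach G n u w := by
  induction h with
  | refl => exact ⟨0, rfl⟩
  | tail _ hbc ih =>
    obtain ⟨n, hn⟩ := ih
    obtain ⟨e, he, hr⟩ := hbc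
    exact ⟨n + 1, reach_trans hn ⟨e, he, (hr : G.r e = _)⟩⟩

lemma exists_edge_from (hSC : G.StronglyConnected) (hedge : Nonempty Ed) (u : V) :
    ∃ e, G.s e = u := by
  obtain ⟨e0⟩ := hedge
  rcases (hSC u (G.s e0)).cases_head with h | ⟨c, hc, -⟩
  · exact ⟨e0, h.symm⟩
  · obtain ⟨e, he, -⟩ := hc
    exact ⟨e, he⟩

lemma not_isSink (hSC : G.StronglyConnected) (hedge : Nonempty Ed) (u : V) :
    ¬ G.IsSink u := by
  intro h
  obtain ⟨e, he⟩ := exists_edge_from hSC hedge u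
  exact h e he

lemma reach_pos (hSC : G.StronglyConnected) (hedge : Nonempty Ed) (u w : V) :
    ∃ n, reach G (n+1) u w := by
  obtain ⟨e, he⟩ := exists_edge_from hSC hedge u
  obtain ⟨n, hn⟩ := flowsTo_reach (hSC (G.r e) w)
  exact ⟨n, e, he, hn⟩

variable {v : V} {d : ℕ}

lemma dvd_reach_closed (hper : G.IsPeriodOf d v) {n : ℕ} (h : reach G n v v) : d ∣ n := by
  rcases Nat.eq_zero_or_pos n with rfl | hn
  · exact dvd_zero d
  · exact hper.1 n (mem_closedLens.mpr ⟨h, hn⟩)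

lemma reach_congr_zmod (hSC : G.StronglyConnected) (hedge : Nonempty Ed)
    (hper : G.IsPeriodOf d v) {n1 n2 : ℕ} {w : V}
    (h1 : reach G n1 v w) (h2 : reach G n2 v w) : (n1 : ZMod d) = n2 := by
  obtain ⟨m, hm⟩ := reach_pos hSC hedge w v
  have hk1 := dvd_reach_closed hper (reach_trans h1 hm)
  have hk2 := dvd_reach_closed hper (reach_trans h2 hm)
  have e1 : (n1 + (m+1)) ≡ 0 [MOD d] := Nat.modEq_zero_iff_dvd.mpr hk1
  have e2 : (n2 + (m+1)) ≡ 0 [MOD d] := Nat.modEq_zero_iff_dvd.mpr hk2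
  exact (ZMod.natCast_eq_natCast_iff _ _ _).mpr
    (Nat.ModEq.add_right_cancel' (m+1) (e1.trans e2.symm))

noncomputable def ellF (hSC : G.StronglyConnected) (v w : V) : ℕ :=
  (flowsTo_reach (hSC v w)).choose

lemma ellF_spec (hSC : G.StronglyConnected) (v w : V) : reach G (ellF hSC v w) v w :=
  (flowsTo_reach (hSC v w)).choose_spec

noncomputable def deltaF (hSC : G.StronglyConnected) (v : V) (d : ℕ) (w : V) : ZMod d :=
  (ellF hSC v w : ZMod d)

lemma deltaF_spec (hSC : G.StronglyConnected) (hedge : Nonempty Ed)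
    (hper : G.IsPeriodOf d v) {n : ℕ} {w : V} (h : reach G n v w) :
    (n : ZMod d) = deltaF hSC v d w :=
  reach_congr_zmod hSC hedge hper h (ellF_spec hSC v w)

lemma deltaF_v (hSC : G.StronglyConnected) (hedge : Nonempty Ed)
    (hper : G.IsPeriodOf d v) : deltaF hSC v d v = 0 := by
  have := deltaF_spec hSC hedge hper (reach_zero v)
  rw [← this, Nat.cast_zero]

lemma deltaF_step (hSC : G.StronglyConnected) (hedge : Nonempty Ed)
    (hper : G.IsPeriodOf d v) (e : Ed) :
    deltaF hSC v d (G.r e) = deltaF hSC v d (G.s e) + 1 := by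
  have h : reach G (ellF hSC v (G.s e) + 1) v (G.r e) :=
    reach_trans (ellF_spec hSC v (G.s e)) ⟨e, rfl, reach_zero _⟩
  have h2 := deltaF_spec hSC hedge hper h
  rw [← h2, Nat.cast_add, Nat.cast_one, deltaF]

lemma reach_smul (k : ℕ) {n : ℕ} (h : reach G n v v) : reach G (k * n) v v := by
  induction k with
  | zero => rw [Nat.zero_mul]; exact reach_zero v
  | succ k ih => rw [Nat.succ_mul]; exact reach_trans ih h

lemma semigroup_bound (hSC : G.StronglyConnected) (hedge : Nonempty Ed)
    (hper : G.IsPeriodOf d v) (hd : 1 ≤ d) :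
    ∃ N : ℕ, ∀ m : ℕ, N ≤ m → d ∣ m → reach G m v v := by
  classical
  set K : AddSubgroup ℤ :=
    { carrier := {x | ∃ a b : ℕ, reach G a v v ∧ reach G b v v ∧ x = (a:ℤ) - b}
      zero_mem' := ⟨0, 0, reach_zero v, reach_zero v, by simp⟩
      add_mem' := by
        rintro x y ⟨a, b, ha, hb, rfl⟩ ⟨a', b', ha', hb', rfl⟩
        exact ⟨a + a', b + b', reach_trans ha ha', reach_trans hb hb', by push_cast; ring⟩
      neg_mem' := by
        rintro x ⟨a, b, ha, hb, rfl⟩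
        exact ⟨b, a, hb, ha, by ring⟩ } with hK
  have hdK : ((d:ℤ)) ∈ K := by
    obtain ⟨g, hg⟩ := Int.subgroup_cyclic K
    have hgd : g.natAbs ∣ d := by
      refine hper.2 _ (fun n hn => ?_)
      have hn' : reach G n v v := (mem_closedLens.mp hn).1
      have hnK : (n:ℤ) ∈ K := ⟨n, 0, hn', reach_zero v, by simp⟩
      rw [hg] at hnK
      obtain ⟨k, hk⟩ := AddSubgroup.mem_closure_singleton.mp hnK
      have hdvd : g ∣ (n:ℤ) := ⟨k, by rw [← hk, zsmul_eq_mul]; push_cast; ring⟩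
      have := Int.natAbs_dvd_natAbs.mpr hdvd
      simpa using this
    have hdg : (d:ℤ) ∣ g := by
      have hgK : g ∈ K := by
        rw [hg]; exact AddSubgroup.mem_closure_singleton.mpr ⟨1, one_smul _ _⟩
      obtain ⟨a, b, ha, hb, hab⟩ := hgK
      rw [hab]
      exact dvd_sub (Int.natCast_dvd_natCast.mpr (dvd_reach_closed hper ha))
        (Int.natCast_dvd_natCast.mpr (dvd_reach_closed hper hb))
    have hna : g.natAbs = d :=
      Nat.dvd_antisymm hgd (Int.natCast_dvd_natCast.mp (Int.dvd_natAbs.mpr hdg))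
    rw [hg]
    rcases Int.natAbs_eq g with h | h
    · exact AddSubgroup.mem_closure_singleton.mpr ⟨1, by rw [one_smul, h, hna]⟩
    · exact AddSubgroup.mem_closure_singleton.mpr ⟨-1, by rw [neg_one_zsmul, h, hna]; simp⟩
  obtain ⟨a, b, ha, hb, hab⟩ := hdK
  have hab' : a = b + d := by omega
  obtain ⟨b', rfl⟩ := dvd_reach_closed hper hb
  rcases Nat.eq_zero_or_pos b' with rfl | hb'
  · refine ⟨d, fun m hm hdm => ?_⟩
    obtain ⟨t, rfl⟩ := hdm
    have hA : a = d := by omega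
    have h2 := reach_smul t (hA ▸ ha)
    rwa [Nat.mul_comm] at h2
  · refine ⟨d * (b' * (b' + 1)), fun m hm hdm => ?_⟩
    obtain ⟨t, rfl⟩ := hdm
    have ht : b' * (b' + 1) ≤ t := Nat.le_of_mul_le_mul_left hm (by omega)
    set α := t % b' with hα
    set q := t / b' with hq
    have hdm' : b' * q + α = t := Nat.div_add_mod t b'
    have hαb : α < b' := Nat.mod_lt t hb'
    have hqα : α + 1 ≤ q := by
      have h3 : b' * (b' + 1) = b' * b' + b' := Nat.mul_succ b' b'
      have hBQ : b' * b' < b' * q := by omega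
      have := Nat.lt_of_mul_lt_mul_left hBQ
      omega
    set β := q - α with hβ'
    have hβ : q = β + α := by omega
    have key : t * d = α * a + β * (d * b') := by
      rw [hab', ← hdm', hβ]
      ring
    rw [show d * t = α * a + β * (d * b') from by rw [Nat.mul_comm]; exact key]
    exact reach_trans (reach_smul α ha) (reach_smul β hb)

lemma reach_of_large (hSC : G.StronglyConnected) (hedge : Nonempty Ed)
    (hper : G.IsPeriodOf d v) (hd : 1 ≤ d) :
    ∃ N : ℕ, ∀ (w : V) (L : ℕ), N ≤ L → (L : ZMod d) = deltaF hSC v d w →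
      (reach G L v w ∧ 1 ≤ L) := by
  obtain ⟨N0, hN0⟩ := semigroup_bound hSC hedge hper hd
  set P : V → ℕ := fun w => (reach_pos hSC hedge v w).choose + 1 with hPdef
  have hP : ∀ w, reach G (P w) v w := fun w => (reach_pos hSC hedge v w).choose_spec
  set M := Finset.univ.sup P with hM
  refine ⟨N0 + M + 1, fun w L hL hres => ?_⟩
  have hPM : P w ≤ M := Finset.le_sup (Finset.mem_univ w)
  have h1 : (P w : ZMod d) = deltaF hSC v d w := deltaF_spec hSC hedge hper (hP w)
  have hmod : L % d = (P w) % d :=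
    (ZMod.natCast_eq_natCast_iff L (P w) d).mp (by rw [hres, h1])
  have hle : P w ≤ L := by omega
  have hdvd : d ∣ L - P w := (Nat.modEq_iff_dvd' hle).mp hmod.symm
  have hreach : reach G (L - P w) v v := hN0 _ (by omega) hdvd
  have h2 := reach_trans hreach (hP w)
  rw [Nat.sub_add_cancel (by omega)] at h2
  exact ⟨h2, by omega⟩

section MLeLemmas

variable {M : Type} [AddCommMonoid M]

lemma mle_refl (a : M) : MLe a a := ⟨0, add_zero a⟩

lemma mle_zero (a : M) : MLe 0 a := ⟨a, zero_add a⟩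

lemma mle_trans {a b c : M} (h1 : MLe a b) (h2 : MLe b c) : MLe a c := by
  obtain ⟨x, hx⟩ := h1
  obtain ⟨y, hy⟩ := h2
  exact ⟨x + y, by rw [← add_assoc, hx, hy]⟩

lemma mle_add {a b a' b' : M} (h1 : MLe a b) (h2 : MLe a' b') : MLe (a + a') (b + b') := by
  obtain ⟨x, hx⟩ := h1
  obtain ⟨y, hy⟩ := h2
  exact ⟨x + y, by rw [add_add_add_comm, hx, hy]⟩

lemma mle_smul (n : ℕ) {a b : M} (h : MLe a b) : MLe (n • a) (n • b) := by
  obtain ⟨x, hx⟩ := h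
  exact ⟨n • x, by rw [← smul_add, hx]⟩

lemma mle_sum_mem {ι : Type} {F : Finset ι} {f : ι → M} {x : ι} (hx : x ∈ F) :
    MLe (f x) (∑ y ∈ F, f y) := by
  classical
  exact ⟨∑ y ∈ F.erase x, f y, Finset.add_sum_erase F f hx⟩

lemma mle_sum_bound {ι : Type} {F : Finset ι} {f : ι → M} {c : M}
    (h : ∀ x ∈ F, ∃ n : ℕ, MLe (f x) (n • c)) : ∃ n : ℕ, MLe (∑ x ∈ F, f x) (n • c) := by
  classical
  induction F using Finset.induction with
  | empty => exact ⟨0, by rw [Finset.sum_empty]; exact mle_zero _⟩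
  | insert a s hx ih =>
    obtain ⟨n1, h1⟩ := h a (Finset.mem_insert_self a s)
    obtain ⟨n2, h2⟩ := ih (fun x hxs => h x (Finset.mem_insert_of_mem hxs))
    exact ⟨n1 + n2, by rw [Finset.sum_insert hx, add_nsmul]; exact mle_add h1 h2⟩

lemma mem_orderIdealGen_zero (x : M) : (0 : M) ∈ orderIdealGen x := ⟨0, mle_zero _⟩

lemma mem_orderIdealGen_add {x a b : M} (ha : a ∈ orderIdealGen x) (hb : b ∈ orderIdealGen x) :
    a + b ∈ orderIdealGen x := by
  obtain ⟨n1, h1⟩ := ha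
  obtain ⟨n2, h2⟩ := hb
  exact ⟨n1 + n2, by rw [add_nsmul]; exact mle_add h1 h2⟩

end MLeLemmas

section TalLemmas

variable {G : DGraph V Ed}

lemma rel_eq (hSC : G.StronglyConnected) (hedge : Nonempty Ed) (u : V) (m : ℤ) :
    G.gen G.rowFinite_of_finite u m
      = ∑ e ∈ (G.rowFinite_of_finite u).toFinset,
          G.gen G.rowFinite_of_finite (G.r e) (m + 1) := by
  show (G.talCon G.rowFinite_of_finite).mk' (Finsupp.single (u, m) 1)
      = ∑ e ∈ (G.rowFinite_of_finite u).toFinset,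
          (G.talCon G.rowFinite_of_finite).mk' (Finsupp.single (G.r e, m + 1) 1)
  rw [← map_sum]
  exact (AddCon.eq _).mpr
    (AddConGen.Rel.of _ _ ⟨u, m, not_isSink hSC hedge u, rfl, rfl⟩)

variable {v : V} {d : ℕ}

lemma genB (hSC : G.StronglyConnected) (hedge : Nonempty Ed) :
    ∀ {n : ℕ} {u w : V}, reach G n u w → ∀ m : ℤ,
      MLe (G.gen G.rowFinite_of_finite w (m + n)) (G.gen G.rowFinite_of_finite u m) := by
  intro n
  induction n with
  | zero =>
    intro u w h m
    have h' : u = w := h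
    subst h'
    have : m + ((0:ℕ):ℤ) = m := by push_cast; ring
    rw [this]
    exact mle_refl _
  | succ n ih =>
    rintro u w ⟨e, he, hr⟩ m
    have h2 : MLe (G.gen G.rowFinite_of_finite (G.r e) (m+1))
        (G.gen G.rowFinite_of_finite u m) := by
      rw [rel_eq hSC hedge u m]
      exact mle_sum_mem (f := fun e' => G.gen G.rowFinite_of_finite (G.r e') (m+1))
        ((Set.Finite.mem_toFinset (G.rowFinite_of_finite u)).mpr he)
    have h1 := ih hr (m+1)
    have harg : m + ((n+1 : ℕ) : ℤ) = m + 1 + (n : ℤ) := by push_cast; ring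
    rw [harg]
    exact mle_trans h1 h2

lemma genC' (hSC : G.StronglyConnected) (hedge : Nonempty Ed)
    (c : G.Tal G.rowFinite_of_finite) :
    ∀ (t : ℕ) (u : V) (m : ℤ),
      (∀ w, reach G t u w →
          ∃ n : ℕ, MLe (G.gen G.rowFinite_of_finite w (m + t)) (n • c)) →
      ∃ n : ℕ, MLe (G.gen G.rowFinite_of_finite u m) (n • c) := by
  intro t
  induction t with
  | zero =>
    intro u m h
    obtain ⟨n, hn⟩ := h u (reach_zero u)
    rw [show m + ((0:ℕ):ℤ) = m from by push_cast; ring] at hn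
    exact ⟨n, hn⟩
  | succ t ih =>
    intro u m h
    rw [rel_eq hSC hedge u m]
    apply mle_sum_bound
    intro e he'
    have hse : G.s e = u := (Set.Finite.mem_toFinset (G.rowFinite_of_finite u)).mp he'
    apply ih (G.r e) (m+1)
    intro w hw
    obtain ⟨n, hn⟩ := h w ⟨e, hse, hw⟩
    refine ⟨n, ?_⟩
    rw [show m + 1 + (t:ℤ) = m + ((t+1 : ℕ):ℤ) from by push_cast; ring]
    exact hn

lemma genC (hSC : G.StronglyConnected) (hedge : Nonempty Ed)
    (hper : G.IsPeriodOf d v) (hd : 1 ≤ d) {m m' : ℤ}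
    (hm : ((m : ZMod d)) = ((m' : ZMod d))) :
    ∃ n : ℕ, MLe (G.gen G.rowFinite_of_finite v m)
      (n • G.gen G.rowFinite_of_finite v m') := by
  obtain ⟨N, hN⟩ := reach_of_large hSC hedge hper hd
  obtain ⟨t, ht⟩ : ∃ t : ℕ, m' - m + N + 1 ≤ (t:ℤ) := ⟨(m' - m + N + 1).toNat, by omega⟩
  apply genC' hSC hedge _ t v m
  intro w hw
  obtain ⟨L, hL⟩ : ∃ L : ℕ, (L:ℤ) = m + t - m' := ⟨(m + t - m').toNat, by omega⟩
  have hres : (L : ZMod d) = deltaF hSC v d w := by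
    have h1 : ((t : ℕ) : ZMod d) = deltaF hSC v d w := deltaF_spec hSC hedge hper hw
    have h2 := congrArg (fun z : ℤ => (z : ZMod d)) hL
    push_cast at h2
    rw [h2, hm, ← h1]
    ring
  obtain ⟨hreach, -⟩ := hN w L (by omega) hres
  refine ⟨1, ?_⟩
  rw [one_smul]
  have hB := genB hSC hedge hreach m'
  rw [show m + ((t:ℕ):ℤ) = m' + (L:ℤ) from by omega]
  exact hB

lemma genMain (hSC : G.StronglyConnected) (hedge : Nonempty Ed)
    (hper : G.IsPeriodOf d v) (hd : 1 ≤ d) (w : V) (j m' : ℤ)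
    (hj : (j : ZMod d) - deltaF hSC v d w = (m' : ZMod d)) :
    ∃ n : ℕ, MLe (G.gen G.rowFinite_of_finite w j)
      (n • G.gen G.rowFinite_of_finite v m') := by
  have hr := ellF_spec hSC v w
  have h1 : MLe (G.gen G.rowFinite_of_finite w j)
      (G.gen G.rowFinite_of_finite v (j - ellF hSC v w)) := by
    have hB := genB hSC hedge hr (j - ellF hSC v w)
    rwa [sub_add_cancel] at hB
  have h2 : ∃ n : ℕ, MLe (G.gen G.rowFinite_of_finite v (j - ellF hSC v w))
      (n • G.gen G.rowFinite_of_finite v m') := by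
    apply genC hSC hedge hper hd
    have : ((j - (ellF hSC v w : ℤ) : ℤ) : ZMod d)
        = (j : ZMod d) - deltaF hSC v d w := by
      push_cast
      rw [deltaF]
    rw [this, hj]
  obtain ⟨n, hn⟩ := h2
  exact ⟨n, mle_trans h1 hn⟩

end TalLemmas
section PhiPart

variable {G : DGraph V Ed}

/-- Total mass of an element of the free commutative monoid. -/
noncomputable def massF : ((V × ℤ) →₀ ℕ) →+ ℕ :=
  Finsupp.liftAddHom fun _ => AddMonoidHom.id ℕ

lemma massF_single (p : V × ℤ) (n : ℕ) :
    massF (Finsupp.single p n) = n := by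
  rw [massF, Finsupp.liftAddHom_apply_single]
  rfl

lemma massF_zero {x : (V × ℤ) →₀ ℕ} (h : massF x = 0) : x = 0 := by
  induction x using Finsupp.induction with
  | zero => rfl
  | single_add p n f hp hn ih =>
    rw [map_add, massF_single] at h
    exact absurd (by omega : n = 0) hn

/-- The congruence "both sides have zero mass or both have nonzero mass". -/
noncomputable def con0 : AddCon ((V × ℤ) →₀ ℕ) where
  r a b := (massF a = 0 ↔ massF b = 0)
  iseqv := ⟨fun _ => Iff.rfl, Iff.symm, Iff.trans⟩
  add' := by
    intro a b c e h1 h2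
    have h1' : massF a = 0 ↔ massF b = 0 := h1
    have h2' : massF c = 0 ↔ massF e = 0 := h2
    show massF (a + c) = 0 ↔ massF (b + e) = 0
    rw [map_add, map_add, Nat.add_eq_zero, Nat.add_eq_zero, h1', h2']

lemma talCon_le_con0 :
    G.talCon G.rowFinite_of_finite ≤ con0 (V := V) := by
  apply AddCon.addConGen_le.mpr
  rintro a b ⟨u, i, hu, rfl, rfl⟩
  show massF _ = 0 ↔ massF _ = 0
  rw [massF_single, map_sum]
  simp only [massF_single]
  rw [Finset.sum_const, smul_eq_mul, mul_one]
  have hcard : 0 < (G.rowFinite_of_finite u).toFinset.card := by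
    rw [DGraph.IsSink] at hu
    push_neg at hu
    obtain ⟨e, he⟩ := hu
    exact Finset.card_pos.mpr ⟨e, (Set.Finite.mem_toFinset _).mpr he⟩
  omega

lemma tal_conical {a b : G.Tal G.rowFinite_of_finite} (h : a + b = 0) : a = 0 := by
  obtain ⟨x, rfl⟩ := AddCon.mk'_surjective a
  obtain ⟨y, rfl⟩ := AddCon.mk'_surjective b
  have h' : (G.talCon G.rowFinite_of_finite) (x + y) 0 := by
    apply (AddCon.eq _).mp
    show (G.talCon G.rowFinite_of_finite).mk' (x + y) = (G.talCon G.rowFinite_of_finite).mk' 0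
    rw [map_add, map_zero]
    exact h
  have h2 : massF (x + y) = 0 ↔ massF (0 : (V × ℤ) →₀ ℕ) = 0 :=
    AddCon.le_def.mp talCon_le_con0 h'
  have h3 : massF (x + y) = 0 := h2.mpr (by rw [map_zero])
  rw [map_add] at h3
  have hx0 : x = 0 := massF_zero (by omega)
  rw [hx0, map_zero]
  rfl

variable {v : V} {d : ℕ}

/-- The identification of `ZMod d` with `Fin d` for `d ≥ 1`. -/
def toFinD (hd : 1 ≤ d) (x : ZMod d) : Fin d :=
  haveI : NeZero d := ⟨by omega⟩
  ⟨x.val, ZMod.val_lt x⟩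

/-- The slot of a generator `w(j)` in the direct sum decomposition. -/
noncomputable def slotF (hSC : G.StronglyConnected) (v : V) (d : ℕ) (hd : 1 ≤ d)
    (w : V) (j : ℤ) : Fin d :=
  toFinD hd ((j : ZMod d) - deltaF hSC v d w)

/-- The grading homomorphism on the free commutative monoid. -/
noncomputable def bigF (hSC : G.StronglyConnected) (v : V) (d : ℕ) (hd : 1 ≤ d) :
    ((V × ℤ) →₀ ℕ) →+ (Fin d → G.Tal G.rowFinite_of_finite) :=
  Finsupp.liftAddHom fun p =>
    multiplesHom _ (Pi.single (slotF hSC v d hd p.1 p.2)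
      (G.gen G.rowFinite_of_finite p.1 p.2))

lemma pi_single_sum {N : Type} [AddCommMonoid N] {ι : Type} (F : Finset ι)
    (g : ι → N) (s : Fin d) :
    ∑ e ∈ F, (Pi.single s (g e) : Fin d → N) = Pi.single s (∑ e ∈ F, g e) := by
  funext k
  rw [Finset.sum_apply]
  by_cases hk : k = s
  · subst hk
    simp [Pi.single_eq_same]
  · simp [Pi.single_eq_of_ne hk]

lemma bigF_single (hSC : G.StronglyConnected) (hd : 1 ≤ d) (p : V × ℤ) (n : ℕ) :
    bigF hSC v d hd (Finsupp.single p n)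
      = n • Pi.single (slotF hSC v d hd p.1 p.2) (G.gen G.rowFinite_of_finite p.1 p.2) := by
  refine Eq.trans ?_ (multiplesHom_apply _ n)
  exact Finsupp.liftAddHom_apply_single _ p n

lemma bigF_ker (hSC : G.StronglyConnected) (hedge : Nonempty Ed)
    (hper : G.IsPeriodOf d v) (hd : 1 ≤ d) :
    G.talCon G.rowFinite_of_finite ≤ AddCon.ker (bigF hSC v d hd) := by
  apply AddCon.addConGen_le.mpr
  rintro a b ⟨u, i, hu, rfl, rfl⟩
  rw [AddCon.ker_rel]
  rw [bigF_single, one_smul, map_sum]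
  have key : ∀ e ∈ (G.rowFinite_of_finite u).toFinset,
      (bigF hSC v d hd) (Finsupp.single (G.r e, i+1) 1)
        = Pi.single (slotF hSC v d hd u i)
            (G.gen G.rowFinite_of_finite (G.r e) (i+1)) := by
    intro e he
    have hse : G.s e = u := (Set.Finite.mem_toFinset (G.rowFinite_of_finite u)).mp he
    rw [bigF_single, one_smul]
    have hslot : slotF hSC v d hd (G.r e) (i+1) = slotF hSC v d hd u i := by
      rw [slotF, slotF]
      congr 1
      rw [deltaF_step hSC hedge hper e, hse]
      push_cast
      ring
    rw [hslot]
  rw [Finset.sum_congr rfl key]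
  rw [pi_single_sum (d := d), ← rel_eq hSC hedge u i]

/-- The grading homomorphism on the talented monoid. -/
noncomputable def PhiF (hSC : G.StronglyConnected) (hedge : Nonempty Ed)
    (hper : G.IsPeriodOf d v) (hd : 1 ≤ d) :
    G.Tal G.rowFinite_of_finite →+ (Fin d → G.Tal G.rowFinite_of_finite) :=
  AddCon.lift _ (bigF hSC v d hd) (bigF_ker hSC hedge hper hd)

lemma PhiF_mk (hSC : G.StronglyConnected) (hedge : Nonempty Ed)
    (hper : G.IsPeriodOf d v) (hd : 1 ≤ d) (x : (V × ℤ) →₀ ℕ) :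
    PhiF hSC hedge hper hd ((G.talCon G.rowFinite_of_finite).mk' x)
      = bigF hSC v d hd x :=
  AddCon.lift_mk' _ x

lemma PhiF_gen (hSC : G.StronglyConnected) (hedge : Nonempty Ed)
    (hper : G.IsPeriodOf d v) (hd : 1 ≤ d) (w : V) (j : ℤ) :
    PhiF hSC hedge hper hd (G.gen G.rowFinite_of_finite w j)
      = Pi.single (slotF hSC v d hd w j) (G.gen G.rowFinite_of_finite w j) := by
  show PhiF hSC hedge hper hd
      ((G.talCon G.rowFinite_of_finite).mk' (Finsupp.single (w, j) 1))
    = Pi.single (slotF hSC v d hd w j) (G.gen G.rowFinite_of_finite w j)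
  rw [PhiF_mk, bigF_single, one_smul]

lemma bigF_sum (hSC : G.StronglyConnected) (hd : 1 ≤ d) (x : (V × ℤ) →₀ ℕ) :
    ∑ i, bigF hSC v d hd x i = (G.talCon G.rowFinite_of_finite).mk' x := by
  induction x using Finsupp.induction with
  | zero => rw [map_zero, map_zero]; simp; rfl
  | single_add p n f hp hn ih =>
    rw [map_add, map_add]
    rw [show (∑ i, (bigF hSC v d hd (Finsupp.single p n) + bigF hSC v d hd f) i)
        = (∑ i, bigF hSC v d hd (Finsupp.single p n) i) + ∑ i, bigF hSC v d hd f i from by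
      rw [← Finset.sum_add_distrib]; rfl]
    rw [ih]
    congr 1
    rw [bigF_single]
    simp only [Pi.smul_apply]
    rw [← Finset.smul_sum, Finset.sum_pi_single', if_pos (Finset.mem_univ _)]
    have h2 : Finsupp.single p n = n • Finsupp.single p 1 := by
      rw [Finsupp.smul_single, smul_eq_mul, mul_one]
    rw [h2, map_nsmul]
    rfl

lemma PhiF_sum (hSC : G.StronglyConnected) (hedge : Nonempty Ed)
    (hper : G.IsPeriodOf d v) (hd : 1 ≤ d) (z : G.Tal G.rowFinite_of_finite) :
    ∑ i, PhiF hSC hedge hper hd z i = z := by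
  obtain ⟨x, rfl⟩ := AddCon.mk'_surjective z
  rw [PhiF_mk]
  exact bigF_sum hSC hd x

lemma slotF_v (hSC : G.StronglyConnected) (hedge : Nonempty Ed)
    (hper : G.IsPeriodOf d v) (hd : 1 ≤ d) (i : Fin d) :
    slotF hSC v d hd v ((i : ℕ) : ℤ) = i := by
  haveI : NeZero d := ⟨by omega⟩
  rw [slotF, deltaF_v hSC hedge hper, sub_zero]
  apply Fin.ext
  show (((((i:ℕ):ℤ)) : ZMod d)).val = (i : ℕ)
  rw [Int.cast_natCast]
  exact ZMod.val_cast_of_lt i.isLt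

lemma PhiF_ne (hSC : G.StronglyConnected) (hedge : Nonempty Ed)
    (hper : G.IsPeriodOf d v) (hd : 1 ≤ d) {x : G.Tal G.rowFinite_of_finite}
    {i : Fin d} (hx : x ∈ orderIdealGen (G.gen G.rowFinite_of_finite v ((i:ℕ):ℤ)))
    {k : Fin d} (hk : k ≠ i) : PhiF hSC hedge hper hd x k = 0 := by
  obtain ⟨n, c, hc⟩ := hx
  have h1 : PhiF hSC hedge hper hd x k + PhiF hSC hedge hper hd c k
      = n • (PhiF hSC hedge hper hd (G.gen G.rowFinite_of_finite v ((i:ℕ):ℤ)) k) := by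
    rw [← Pi.add_apply, ← map_add, hc, map_nsmul]
    rfl
  rw [PhiF_gen, slotF_v hSC hedge hper hd, Pi.single_eq_of_ne hk, smul_zero] at h1
  exact tal_conical h1

lemma PhiF_self (hSC : G.StronglyConnected) (hedge : Nonempty Ed)
    (hper : G.IsPeriodOf d v) (hd : 1 ≤ d) {x : G.Tal G.rowFinite_of_finite}
    {i : Fin d} (hx : x ∈ orderIdealGen (G.gen G.rowFinite_of_finite v ((i:ℕ):ℤ))) :
    PhiF hSC hedge hper hd x i = x := by
  have hs := PhiF_sum hSC hedge hper hd x
  calc PhiF hSC hedge hper hd x i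
      = ∑ k, PhiF hSC hedge hper hd x k :=
        (Finset.sum_eq_single_of_mem i (Finset.mem_univ i)
          (fun k _ hki => PhiF_ne hSC hedge hper hd hx hki)).symm
    _ = x := hs

lemma bigF_mem (hSC : G.StronglyConnected) (hedge : Nonempty Ed)
    (hper : G.IsPeriodOf d v) (hd : 1 ≤ d) (i : Fin d) (x : (V × ℤ) →₀ ℕ) :
    bigF hSC v d hd x i
      ∈ orderIdealGen (G.gen G.rowFinite_of_finite v ((i:ℕ):ℤ)) := by
  haveI : NeZero d := ⟨by omega⟩
  induction x using Finsupp.induction with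
  | zero =>
    rw [map_zero]
    exact mem_orderIdealGen_zero _
  | single_add p n f hp hn ih =>
    rw [map_add]
    refine mem_orderIdealGen_add ?_ ih
    rw [bigF_single, Pi.smul_apply]
    by_cases hs : slotF hSC v d hd p.1 p.2 = i
    · rw [hs, Pi.single_eq_same]
      have hj : ((p.2 : ZMod d)) - deltaF hSC v d p.1 = (((i:ℕ):ℤ) : ZMod d) := by
        have hval := congrArg Fin.val hs
        have hback : (((((p.2 : ZMod d)) - deltaF hSC v d p.1).val : ℕ) : ZMod d)
            = ((p.2 : ZMod d)) - deltaF hSC v d p.1 := ZMod.natCast_rightInverse _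
        rw [← hback]
        rw [show (((p.2 : ZMod d)) - deltaF hSC v d p.1).val = (i : ℕ) from hval]
        rw [Int.cast_natCast]
      obtain ⟨N, hle⟩ := genMain hSC hedge hper hd p.1 p.2 ((i:ℕ):ℤ) hj
      exact ⟨n * N, by rw [mul_smul]; exact mle_smul n hle⟩
    · rw [Pi.single_eq_of_ne (fun h => hs h.symm), smul_zero]
      exact mem_orderIdealGen_zero _

end PhiPart
end Statement10Aux
/-- Let `E` be a finite strongly connected graph with at least one edge,
`v` a vertex and `d ≥ 1` its period.  Then `T_E = [v] ⊕ ¹[v] ⊕ ⋯ ⊕ ^{d-1}[v]`: every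
element of `T_E` is uniquely a sum `x₀ + ⋯ + x_{d-1}` with `xᵢ ∈ ⁱ[v] = [v(i)]`. -/
theorem statement10 {V Ed : Type} [Fintype V] [Fintype Ed] (G : DGraph V Ed)
    (hSC : G.StronglyConnected) (hedge : Nonempty Ed)
    (v : V) (d : ℕ) (hd : 1 ≤ d) (hper : G.IsPeriodOf d v) :
    ∀ z : G.Tal G.rowFinite_of_finite,
      ∃! f : Fin d → G.Tal G.rowFinite_of_finite,
        (∀ i : Fin d,
          f i ∈ orderIdealGen (G.gen G.rowFinite_of_finite v ((i : ℕ) : ℤ))) ∧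
          ∑ i, f i = z := by
  intro z
  refine ⟨fun i => PhiF hSC hedge hper hd z i,
    ⟨fun i => ?_, PhiF_sum hSC hedge hper hd z⟩, ?_⟩
  · obtain ⟨x, hx⟩ := AddCon.mk'_surjective z
    rw [← hx, PhiF_mk]
    exact bigF_mem hSC hedge hper hd i x
  · rintro g ⟨hmem, hsum⟩
    funext i
    have h1 : PhiF hSC hedge hper hd z i = g i := by
      rw [← hsum, map_sum, Finset.sum_apply]
      rw [Finset.sum_eq_single_of_mem i (Finset.mem_univ i)
        (fun j _ hj => PhiF_ne hSC hedge hper hd (hmem j) (Ne.symm hj))]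
      exact PhiF_self hSC hedge hper hd (hmem i)
    exact h1.symm
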